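/- arXiv:2106.00664 — 2 statements merged into one kernel-verified Lean document; each statement's English description precedes it below -/
import Mathlib

section
/- Let S be a type, Init Bad : Set S, and Tr : S → S → Prop, and let F_0, ..., F_N ⊆ S be a monotone inductive trace (Init ⊆ F_0, post(F_i) ⊆ F_{i+1}, F_i ⊆ F_{i+1} for all 0 ≤ i < N) such that F_j ∩ Bad = ∅ for every j ≤ N. If there is an index i < N with F_{i+1} ⊆ F_i, then F_i is an inductive invariant (Init ⊆ F_i, post(F_i) ⊆ F_i, F_i ∩ Bad = ∅) and the transition system is safe. -/
theorem monotoneOn_Iic_of_le_succ {β : Type*} [Preorder β] {f : ℕ → β} {N : ℕ}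
    (hf : ∀ i < N, f i ≤ f (i + 1)) : MonotoneOn f (Set.Iic N) :=
  monotoneOn_of_le_add_one Set.ordConnected_Iic fun a _ _ ha => hf a (Nat.lt_of_succ_le ha)

section TransitionSystem

variable {S : Type*} (Init Bad : Set S) (Tr : S → S → Prop)

def IsInductiveInvariant (Inv : Set S) : Prop :=
  Init ⊆ Inv ∧ {y | ∃ x ∈ Inv, Tr x y} ⊆ Inv ∧ Inv ∩ Bad = ∅

variable {Init Bad Tr}

theorem IsInductiveInvariant.mem_of_path {Inv : Set S} (hInv : IsInductiveInvariant Init Bad Tr Inv)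
    {x : ℕ → S} {k : ℕ} (h0 : x 0 ∈ Init) (hstep : ∀ l < k, Tr (x l) (x (l + 1))) :
    ∀ l ≤ k, x l ∈ Inv := by
  intro l hl
  induction l with
  | zero => exact hInv.1 h0
  | succ l ih => exact hInv.2.1 ⟨x l, ih (Nat.le_of_succ_le hl), hstep l hl⟩

theorem IsInductiveInvariant.no_counterexample {Inv : Set S}
    (hInv : IsInductiveInvariant Init Bad Tr Inv) (k : ℕ) :
    ¬ ∃ x : ℕ → S, x 0 ∈ Init ∧ (∀ l < k, Tr (x l) (x (l + 1))) ∧ x k ∈ Bad := by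
  rintro ⟨x, h0, hstep, hbad⟩
  exact (Set.eq_empty_iff_forall_notMem.mp hInv.2.2) (x k) ⟨hInv.mem_of_path h0 hstep k le_rfl, hbad⟩

end TransitionSystem

/-- Soundness of the Safe rule: if two consecutive frames of a monotone inductive trace
coincide, the frame is an inductive invariant and the system is safe. -/
theorem safe_rule_sound {S : Type*} (Init Bad : Set S) (Tr : S → S → Prop)
    (N : ℕ) (F : ℕ → Set S)
    (hInit : Init ⊆ F 0)
    (hPost : ∀ i < N, {y | ∃ x ∈ F i, Tr x y} ⊆ F (i + 1))
    (hMono : ∀ i < N, F i ⊆ F (i + 1))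
    (hBad : ∀ j ≤ N, F j ∩ Bad = ∅)
    (i : ℕ) (hi : i < N) (hEq : F (i + 1) ⊆ F i) :
    (Init ⊆ F i ∧ {y | ∃ x ∈ F i, Tr x y} ⊆ F i ∧ F i ∩ Bad = ∅) ∧
    ∀ k : ℕ, ¬ ∃ x : ℕ → S, x 0 ∈ Init ∧ (∀ l < k, Tr (x l) (x (l + 1))) ∧ x k ∈ Bad := by
  have hInv : IsInductiveInvariant Init Bad Tr (F i) := by
    refine ⟨hInit.trans ?_, (hPost i hi).trans hEq, hBad i hi.le⟩
    exact monotoneOn_Iic_of_le_succ hMono (Set.mem_Iic.mpr (Nat.zero_le N))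
      (Set.mem_Iic.mpr hi.le) (Nat.zero_le i)
  exact ⟨hInv, hInv.no_counterexample⟩
end

section
/- Let S be a type, Init : Set S, and Tr : S → S → Prop, and let F_0, ..., F_N ⊆ S be a monotone inductive trace (Init ⊆ F_0, post(F_i) ⊆ F_{i+1}, F_i ⊆ F_{i+1} for all 0 ≤ i < N). Fix i < N, let m ⊆ S be a set of states (a proof obligation at level i+1) such that (post(F_i) ∪ Init) ∩ m = ∅, and let L ⊆ S be any set with post(F_i) ∪ Init ⊆ L and L ∩ m = ∅ (an interpolant between the forward image of F_i and m). Define G_j = F_j ∩ L for j ≤ i+1 and G_j = F_j for i+1 < j ≤ N. Then G_0, ..., G_N is again a monotone inductive trace, and moreover G_{i+1} ∩ m = ∅. -/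
/-!
Every frame of the new trace is contained in the old one, so the image of `G j` is still inside
`F (j + 1)`; for `j ≤ i` it is moreover inside `post (F i) ⊆ L`, because the old frames increase
up to `F i`. Hence intersecting the frames `0, …, i + 1` with `L` keeps the trace inductive, and
`L ∩ m = ∅` blocks `m` at frame `i + 1`.
-/

namespace TransitionSystem

variable {S : Type*}

def post (Tr : S → S → Prop) (A : Set S) : Set S := {y | ∃ x ∈ A, Tr x y}

theorem post_mono (Tr : S → S → Prop) {A B : Set S} (hAB : A ⊆ B) : post Tr A ⊆ post Tr B :=
  fun _ ⟨x, hx, hxy⟩ ↦ ⟨x, hAB hx, hxy⟩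

def IsMonotoneTrace (Init : Set S) (Tr : S → S → Prop) (N : ℕ) (F : ℕ → Set S) : Prop :=
  Init ⊆ F 0 ∧ (∀ j < N, post Tr (F j) ⊆ F (j + 1)) ∧ ∀ j < N, F j ⊆ F (j + 1)

def strengthenUpTo (F : ℕ → Set S) (L : Set S) (k : ℕ) (j : ℕ) : Set S :=
  if j ≤ k then F j ∩ L else F j

theorem strengthenUpTo_subset (F : ℕ → Set S) (L : Set S) (k j : ℕ) :
    strengthenUpTo F L k j ⊆ F j := by
  unfold strengthenUpTo
  split_ifs
  exacts [Set.inter_subset_left, subset_rfl]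

theorem frame_subset_of_le {N : ℕ} {F : ℕ → Set S} (hMono : ∀ j < N, F j ⊆ F (j + 1))
    {j k : ℕ} (hjk : j ≤ k) (hkN : k ≤ N) : F j ⊆ F k := by
  induction hjk with
  | refl => exact subset_rfl
  | step _ ih => exact (ih (by omega)).trans (hMono _ (by omega))

theorem IsMonotoneTrace.strengthen {Init : Set S} {Tr : S → S → Prop} {N : ℕ}
    {F : ℕ → Set S} (hF : IsMonotoneTrace Init Tr N F) {L : Set S} {k : ℕ}
    (hInitL : Init ⊆ L) (hPostL : ∀ j < k, post Tr (F j) ⊆ L) :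
    IsMonotoneTrace Init Tr N (strengthenUpTo F L k) := by
  obtain ⟨hInit, hPost, hMono⟩ := hF
  refine ⟨?_, fun j hj ↦ ?_, fun j hj ↦ ?_⟩
  · simpa [strengthenUpTo] using ⟨hInit, hInitL⟩
  · have hImage := post_mono Tr (strengthenUpTo_subset F L k j)
    by_cases hjk : j + 1 ≤ k
    · simp only [strengthenUpTo, if_pos hjk]
      exact Set.subset_inter (hImage.trans (hPost j hj)) (hImage.trans (hPostL j (by omega)))
    · simpa only [strengthenUpTo, if_neg hjk] using hImage.trans (hPost j hj)
  · by_cases hjk : j + 1 ≤ k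
    · simp only [strengthenUpTo, if_pos hjk, if_pos (by omega : j ≤ k)]
      exact Set.inter_subset_inter_left L (hMono j hj)
    · simp only [strengthenUpTo, if_neg hjk]
      exact (strengthenUpTo_subset F L k j).trans (hMono j hj)

end TransitionSystem

open TransitionSystem in
theorem newlemma_rule_sound_general {S : Type*} (Init : Set S) (Tr : S → S → Prop)
    (N : ℕ) (F : ℕ → Set S)
    (hInit : Init ⊆ F 0)
    (hPost : ∀ i < N, {y | ∃ x ∈ F i, Tr x y} ⊆ F (i + 1))
    (hMono : ∀ i < N, F i ⊆ F (i + 1))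
    (i : ℕ) (hi : i < N) (m L : Set S)
    (hItpL : {y | ∃ x ∈ F i, Tr x y} ∪ Init ⊆ L)
    (hItpM : L ∩ m = ∅) :
    let G : ℕ → Set S := fun j => if j ≤ i + 1 then F j ∩ L else F j
    (Init ⊆ G 0 ∧ (∀ j < N, {y | ∃ x ∈ G j, Tr x y} ⊆ G (j + 1)) ∧
      (∀ j < N, G j ⊆ G (j + 1))) ∧ G (i + 1) ∩ m = ∅ := by
  have hF : IsMonotoneTrace Init Tr N F := ⟨hInit, hPost, hMono⟩
  have hPostL : ∀ j < i + 1, post Tr (F j) ⊆ L := fun j hj ↦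
    (post_mono Tr (frame_subset_of_le hMono (Nat.le_of_lt_succ hj) hi.le)).trans
      (Set.subset_union_left.trans hItpL)
  refine ⟨hF.strengthen (Set.subset_union_right.trans hItpL) hPostL, ?_⟩
  show strengthenUpTo F L (i + 1) (i + 1) ∩ m = ∅
  rw [strengthenUpTo, if_pos le_rfl, Set.inter_assoc, hItpM, Set.inter_empty]

/-- Soundness of the NewLemma rule: an interpolant L between post(F i) ∪ Init and a blocked
proof obligation m may be added to all frames up to i+1, preserving the monotone inductive
trace properties and blocking m at frame i+1. -/
theorem newlemma_rule_sound {S : Type*} (Init : Set S) (Tr : S → S → Prop)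
    (N : ℕ) (F : ℕ → Set S)
    (hInit : Init ⊆ F 0)
    (hPost : ∀ i < N, {y | ∃ x ∈ F i, Tr x y} ⊆ F (i + 1))
    (hMono : ∀ i < N, F i ⊆ F (i + 1))
    (i : ℕ) (hi : i < N) (m L : Set S)
    (hBlocked : ({y | ∃ x ∈ F i, Tr x y} ∪ Init) ∩ m = ∅)
    (hItpL : {y | ∃ x ∈ F i, Tr x y} ∪ Init ⊆ L)
    (hItpM : L ∩ m = ∅) :
    let G : ℕ → Set S := fun j => if j ≤ i + 1 then F j ∩ L else F j
    (Init ⊆ G 0 ∧ (∀ j < N, {y | ∃ x ∈ G j, Tr x y} ⊆ G (j + 1)) ∧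
      (∀ j < N, G j ⊆ G (j + 1))) ∧ G (i + 1) ∩ m = ∅ :=
  newlemma_rule_sound_general Init Tr N F hInit hPost hMono i hi m L hItpL hItpM
end
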